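/- Soundness and completeness of system U: a term t of the λ!-calculus is typable in system U if and only if t →w-normalises to a term p ∈ no_wcf (a weak clash free normal form). Moreover, if Φ derives Γ ⊢ t : τ in system U and t →w* p with b dB-steps and e steps of kind s!/d!, then |Φ| ≥ b + e + |p|_w. -/

import Mathlib

/-! # The Bang Calculus Revisited: common definitions.

Terms are represented with de Bruijn indices, so that all the meta-level
substitutions are capture-avoiding by construction. -/

/-- Terms of the λ!-calculus.  `esub t u` is the explicit substitution
`t[0\u]`: the (anonymous) binder scopes over `t`, not over `u`. -/
inductive Tm : Type
  | var : ℕ → Tm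
  | app : Tm → Tm → Tm
  | lam : Tm → Tm
  | bang : Tm → Tm
  | der : Tm → Tm
  | esub : Tm → Tm → Tm
  deriving DecidableEq

namespace Tm

/-- lifting a renaming under a binder -/
def liftR (f : ℕ → ℕ) : ℕ → ℕ
  | 0 => 0
  | k + 1 => f k + 1

/-- renaming of free variables -/
def rename (f : ℕ → ℕ) : Tm → Tm
  | var k => var (f k)
  | app t u => app (rename f t) (rename f u)
  | lam t => lam (rename (liftR f) t)
  | bang t => bang (rename f t)
  | der t => der (rename f t)
  | esub t u => esub (rename (liftR f) t) (rename f u)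

/-- lifting a simultaneous substitution under a binder -/
def liftS (σ : ℕ → Tm) : ℕ → Tm
  | 0 => var 0
  | k + 1 => rename (· + 1) (σ k)

/-- simultaneous (capture-avoiding) substitution -/
def subst (σ : ℕ → Tm) : Tm → Tm
  | var k => σ k
  | app t u => app (subst σ t) (subst σ u)
  | lam t => lam (subst (liftS σ) t)
  | bang t => bang (subst σ t)
  | der t => der (subst σ t)
  | esub t u => esub (subst (liftS σ) t) (subst σ u)

/-- capture-avoiding substitution of `u` for the variable `0` of `t`,
where the result is placed under `n` extra binders (and `u` already lives
at that depth). -/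
def substIn (n : ℕ) (u : Tm) (t : Tm) : Tm :=
  subst (fun k => match k with
    | 0 => u
    | k + 1 => var (k + n)) t

/-- capture-avoiding meta-level substitution `t{0 := u}` -/
def subst0 (u : Tm) (t : Tm) : Tm := substIn 0 u t

/-- plugging a term into a list context `L ::= ◻ | L[x\t]`; the head of the
list is the argument of the outermost explicit substitution. -/
def plug : List Tm → Tm → Tm
  | [], s => s
  | e :: L, s => esub (plug L s) e

/-- the w-size of a term -/
def wsize : Tm → ℕ
  | var _ => 0
  | app t u => 1 + wsize t + wsize u
  | lam t => 1 + wsize t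
  | bang _ => 0
  | der t => 1 + wsize t
  | esub t u => 1 + wsize t + wsize u

end Tm

/-- the names of the three rewriting rules of the λ!-calculus -/
inductive Rule : Type
  | dB | sb | db
  deriving DecidableEq

open Tm in
/-- the three rewriting rules, applied at the root (at a distance) -/
inductive Root : Rule → Tm → Tm → Prop
  | dB (L : List Tm) (t u : Tm) :
      Root .dB (app (plug L (lam t)) u)
               (plug L (esub t (rename (· + L.length) u)))
  | sb (L : List Tm) (t u : Tm) :
      Root .sb (esub t (plug L (bang u))) (plug L (substIn L.length u t))
  | db (L : List Tm) (t : Tm) :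
      Root .db (der (plug L (bang t))) (plug L t)

/-- closure of each rule under weak contexts (no reduction under `bang`) -/
inductive Step : Rule → Tm → Tm → Prop
  | root {r : Rule} {t t' : Tm} : Root r t t' → Step r t t'
  | appL {r t t'} (u : Tm) : Step r t t' → Step r (Tm.app t u) (Tm.app t' u)
  | appR {r u u'} (t : Tm) : Step r u u' → Step r (Tm.app t u) (Tm.app t u')
  | lam {r t t'} : Step r t t' → Step r (Tm.lam t) (Tm.lam t')
  | der {r t t'} : Step r t t' → Step r (Tm.der t) (Tm.der t')
  | esubL {r t t'} (u : Tm) : Step r t t' → Step r (Tm.esub t u) (Tm.esub t' u)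
  | esubR {r u u'} (t : Tm) : Step r u u' → Step r (Tm.esub t u) (Tm.esub t u')

/-- the weak reduction `→w` of the λ!-calculus -/
def StepW (t t' : Tm) : Prop := ∃ r, Step r t t'

/-- counted weak reduction: `RedCnt t (b, e) u` holds iff `t →w* u` using `b`
dB-steps and `e` steps of kind s!/d!. -/
inductive RedCnt : Tm → ℕ × ℕ → Tm → Prop
  | refl (t : Tm) : RedCnt t (0, 0) t
  | db {t t₁ u : Tm} {b e : ℕ} :
      Step .dB t t₁ → RedCnt t₁ (b, e) u → RedCnt t (b + 1, e) u
  | ex {t t₁ u : Tm} {b e : ℕ} :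
      (Step .sb t t₁ ∨ Step .db t t₁) → RedCnt t₁ (b, e) u →
      RedCnt t (b, e + 1) u

mutual
  /-- neutral w-normal terms -/
  inductive NeW : Tm → Prop
    | var (k : ℕ) : NeW (Tm.var k)
    | app {t u : Tm} : NaW t → NoW u → NeW (Tm.app t u)
    | der {t : Tm} : NbW t → NeW (Tm.der t)
    | esub {t u : Tm} : NeW t → NbW u → NeW (Tm.esub t u)
  /-- neutral-abs w-normal terms -/
  inductive NaW : Tm → Prop
    | bang (t : Tm) : NaW (Tm.bang t)
    | ne {t : Tm} : NeW t → NaW t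
    | esub {t u : Tm} : NaW t → NbW u → NaW (Tm.esub t u)
  /-- neutral-bang w-normal terms -/
  inductive NbW : Tm → Prop
    | ne {t : Tm} : NeW t → NbW t
    | lam {t : Tm} : NoW t → NbW (Tm.lam t)
    | esub {t u : Tm} : NbW t → NbW u → NbW (Tm.esub t u)
  /-- w-normal terms -/
  inductive NoW : Tm → Prop
    | na {t : Tm} : NaW t → NoW t
    | nb {t : Tm} : NbW t → NoW t
end

/-- clashes -/
inductive Clash : Tm → Prop
  | appBang (L : List Tm) (t u : Tm) : Clash (Tm.app (Tm.plug L (Tm.bang t)) u)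
  | esubLam (L : List Tm) (t u : Tm) : Clash (Tm.esub t (Tm.plug L (Tm.lam u)))
  | derLam (L : List Tm) (u : Tm) : Clash (Tm.der (Tm.plug L (Tm.lam u)))
  | appLam (L : List Tm) (t u : Tm) : Clash (Tm.app t (Tm.plug L (Tm.lam u)))

/-- `WSub t s` holds iff `t = W⟨s⟩` for some weak context `W` -/
inductive WSub : Tm → Tm → Prop
  | refl (t : Tm) : WSub t t
  | appL {t s : Tm} (u : Tm) : WSub t s → WSub (Tm.app t u) s
  | appR {u s : Tm} (t : Tm) : WSub u s → WSub (Tm.app t u) s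
  | lam {t s : Tm} : WSub t s → WSub (Tm.lam t) s
  | der {t s : Tm} : WSub t s → WSub (Tm.der t) s
  | esubL {t s : Tm} (u : Tm) : WSub t s → WSub (Tm.esub t u) s
  | esubR {u s : Tm} (t : Tm) : WSub u s → WSub (Tm.esub t u) s

/-- weak clash freeness -/
def Wcf (t : Tm) : Prop := ¬ ∃ s, WSub t s ∧ Clash s

mutual
  /-- neutral weak clash free normal terms -/
  inductive NeCF : Tm → Prop
    | var (k : ℕ) : NeCF (Tm.var k)
    | app {t u : Tm} : NeCF t → NaCF u → NeCF (Tm.app t u)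
    | der {t : Tm} : NeCF t → NeCF (Tm.der t)
    | esub {t u : Tm} : NeCF t → NeCF u → NeCF (Tm.esub t u)
  /-- neutral-abs weak clash free normal terms -/
  inductive NaCF : Tm → Prop
    | bang (t : Tm) : NaCF (Tm.bang t)
    | ne {t : Tm} : NeCF t → NaCF t
    | esub {t u : Tm} : NaCF t → NeCF u → NaCF (Tm.esub t u)
  /-- neutral-bang weak clash free normal terms -/
  inductive NbCF : Tm → Prop
    | ne {t : Tm} : NeCF t → NbCF t
    | lam {t : Tm} : NoCF t → NbCF (Tm.lam t)
    | esub {t u : Tm} : NbCF t → NeCF u → NbCF (Tm.esub t u)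
  /-- weak clash free normal terms -/
  inductive NoCF : Tm → Prop
    | na {t : Tm} : NaCF t → NoCF t
    | nb {t : Tm} : NbCF t → NoCF t
end

/-- Types of system 𝒰: base types, multiset types and arrow types.  A
multiset type is given by a list of types (a representative of the multiset
it determines). -/
inductive Ty : Type
  | base : ℕ → Ty
  | mult : List Ty → Ty
  | arr : List Ty → Ty → Ty

/-- typing contexts: functions from (de Bruijn) variables to multiset types -/
abbrev Ctx := ℕ → Multiset Ty

/-- the context mapping `k` to `M` and anything else to the empty multiset -/
def Ctx.single (k : ℕ) (M : Multiset Ty) : Ctx := fun j => if j = k then M else 0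

/-- removing the (type of the) bound variable `0` from a context -/
def Ctx.tail (Γ : Ctx) : Ctx := fun k => Γ (k + 1)

/-- extending a context with a multiset type for a fresh variable `0` -/
def Ctx.cons (M : Multiset Ty) (Γ : Ctx) : Ctx := fun k =>
  match k with
  | 0 => M
  | k + 1 => Γ k

/-- Sized typing of system 𝒰: `DerU Γ t τ n` means that there is a derivation
of `Γ ⊢ t : τ` whose size (number of rules, not counting `bg`) is `n`. -/
inductive DerU : Ctx → Tm → Ty → ℕ → Prop
  | ax (k : ℕ) (σ : Ty) : DerU (Ctx.single k {σ}) (Tm.var k) σ 1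
  | app {Γ Δ : Ctx} {t u : Tm} {M : List Ty} {τ : Ty} {n m : ℕ} :
      DerU Γ t (Ty.arr M τ) n → DerU Δ u (Ty.mult M) m →
      DerU (Γ + Δ) (Tm.app t u) τ (n + m + 1)
  | abs {Γ : Ctx} {t : Tm} {τ : Ty} {n : ℕ} (M : List Ty) :
      DerU Γ t τ n → Multiset.ofList M = Γ 0 →
      DerU (Ctx.tail Γ) (Tm.lam t) (Ty.arr M τ) (n + 1)
  | es {Γ Δ : Ctx} {t u : Tm} {σ : Ty} {M : List Ty} {n m : ℕ} :
      DerU Γ t σ n → DerU Δ u (Ty.mult M) m → Multiset.ofList M = Γ 0 →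
      DerU (Ctx.tail Γ + Δ) (Tm.esub t u) σ (n + m + 1)
  | bg {t : Tm} (prs : List (Ctx × Ty × ℕ)) :
      (∀ p ∈ prs, DerU p.1 t p.2.1 p.2.2) →
      DerU ((prs.map (·.1)).sum) (Tm.bang t)
           (Ty.mult (prs.map (·.2.1))) ((prs.map (·.2.2)).sum)
  | dr {Γ : Ctx} {t : Tm} {σ : Ty} {n : ℕ} :
      DerU Γ t (Ty.mult [σ]) n → DerU Γ (Tm.der t) σ (n + 1)

/-! ## The source λ-calculus with explicit substitutions (CBN / CBV) -/

/-- terms of the λ-calculus with explicit substitutions (de Bruijn) -/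
inductive Lm : Type
  | var : ℕ → Lm
  | app : Lm → Lm → Lm
  | lam : Lm → Lm
  | esub : Lm → Lm → Lm
  deriving DecidableEq

namespace Lm

def liftR (f : ℕ → ℕ) : ℕ → ℕ
  | 0 => 0
  | k + 1 => f k + 1

def rename (f : ℕ → ℕ) : Lm → Lm
  | var k => var (f k)
  | app t u => app (rename f t) (rename f u)
  | lam t => lam (rename (liftR f) t)
  | esub t u => esub (rename (liftR f) t) (rename f u)

def liftS (σ : ℕ → Lm) : ℕ → Lm
  | 0 => var 0
  | k + 1 => rename (· + 1) (σ k)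

def subst (σ : ℕ → Lm) : Lm → Lm
  | var k => σ k
  | app t u => app (subst σ t) (subst σ u)
  | lam t => lam (subst (liftS σ) t)
  | esub t u => esub (subst (liftS σ) t) (subst σ u)

def substIn (n : ℕ) (u : Lm) (t : Lm) : Lm :=
  subst (fun k => match k with
    | 0 => u
    | k + 1 => var (k + n)) t

/-- capture-avoiding meta-level substitution `t{0 := u}` -/
def subst0 (u : Lm) (t : Lm) : Lm := substIn 0 u t

def plug : List Lm → Lm → Lm
  | [], s => s
  | e :: L, s => esub (plug L s) e

/-- values -/
def IsVal : Lm → Prop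
  | var _ => True
  | lam _ => True
  | _ => False

/-- the n-size of a term -/
def nsize : Lm → ℕ
  | var _ => 0
  | lam t => 1 + nsize t
  | app t _ => 1 + nsize t
  | esub t _ => 1 + nsize t

/-- the v-size of a term -/
def vsize : Lm → ℕ
  | var _ => 0
  | lam _ => 0
  | app t u => 1 + vsize t + vsize u
  | esub t u => 1 + vsize t + vsize u

end Lm

/-- names of the CBN rules -/
inductive NRule : Type
  | dB | s
  deriving DecidableEq

/-- call-by-name reduction (closure of dB and s under CBN contexts) -/
inductive StepN : NRule → Lm → Lm → Prop
  | dB (L : List Lm) (t u : Lm) :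
      StepN .dB (Lm.app (Lm.plug L (Lm.lam t)) u)
                (Lm.plug L (Lm.esub t (Lm.rename (· + L.length) u)))
  | s (t u : Lm) : StepN .s (Lm.esub t u) (Lm.subst0 u t)
  | appL {r t t'} (u : Lm) : StepN r t t' → StepN r (Lm.app t u) (Lm.app t' u)
  | lam {r t t'} : StepN r t t' → StepN r (Lm.lam t) (Lm.lam t')
  | esubL {r t t'} (u : Lm) : StepN r t t' → StepN r (Lm.esub t u) (Lm.esub t' u)

/-- names of the CBV rules -/
inductive VRule : Type
  | dB | sv
  deriving DecidableEq

/-- call-by-value reduction (closure of dB and sv under CBV contexts) -/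
inductive StepV : VRule → Lm → Lm → Prop
  | dB (L : List Lm) (t u : Lm) :
      StepV .dB (Lm.app (Lm.plug L (Lm.lam t)) u)
                (Lm.plug L (Lm.esub t (Lm.rename (· + L.length) u)))
  | sv (L : List Lm) (t v : Lm) (hv : Lm.IsVal v) :
      StepV .sv (Lm.esub t (Lm.plug L v)) (Lm.plug L (Lm.substIn L.length v t))
  | appL {r t t'} (u : Lm) : StepV r t t' → StepV r (Lm.app t u) (Lm.app t' u)
  | appR {r u u'} (t : Lm) : StepV r u u' → StepV r (Lm.app t u) (Lm.app t u')
  | esubL {r t t'} (u : Lm) : StepV r t t' → StepV r (Lm.esub t u) (Lm.esub t' u)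
  | esubR {r u u'} (t : Lm) : StepV r u u' → StepV r (Lm.esub t u) (Lm.esub t u')

mutual
  /-- CBN neutral terms -/
  inductive NeN : Lm → Prop
    | var (k : ℕ) : NeN (Lm.var k)
    | app {t : Lm} (u : Lm) : NeN t → NeN (Lm.app t u)
  /-- CBN normal terms -/
  inductive NoN : Lm → Prop
    | lam {t : Lm} : NoN t → NoN (Lm.lam t)
    | ne {t : Lm} : NeN t → NoN t
end

mutual
  /-- CBV (substituted) variables -/
  inductive VrV : Lm → Prop
    | var (k : ℕ) : VrV (Lm.var k)
    | esub {t u : Lm} : VrV t → NeV u → VrV (Lm.esub t u)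
  /-- CBV neutral terms -/
  inductive NeV : Lm → Prop
    | app₁ {t u : Lm} : VrV t → NoV u → NeV (Lm.app t u)
    | app₂ {t u : Lm} : NeV t → NoV u → NeV (Lm.app t u)
    | esub {t u : Lm} : NeV t → NeV u → NeV (Lm.esub t u)
  /-- CBV normal terms -/
  inductive NoV : Lm → Prop
    | lam (t : Lm) : NoV (Lm.lam t)
    | vr {t : Lm} : VrV t → NoV t
    | ne {t : Lm} : NeV t → NoV t
    | esub {t u : Lm} : NoV t → NeV u → NoV (Lm.esub t u)
end

/-- counted CBN reduction, recording the number of dB- and s-steps -/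
inductive RedCntN : Lm → ℕ × ℕ → Lm → Prop
  | refl (t : Lm) : RedCntN t (0, 0) t
  | db {t t₁ u : Lm} {b e : ℕ} :
      StepN .dB t t₁ → RedCntN t₁ (b, e) u → RedCntN t (b + 1, e) u
  | s {t t₁ u : Lm} {b e : ℕ} :
      StepN .s t t₁ → RedCntN t₁ (b, e) u → RedCntN t (b, e + 1) u

/-- counted CBV reduction, recording the number of dB- and sv-steps -/
inductive RedCntV : Lm → ℕ × ℕ → Lm → Prop
  | refl (t : Lm) : RedCntV t (0, 0) t
  | db {t t₁ u : Lm} {b e : ℕ} :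
      StepV .dB t t₁ → RedCntV t₁ (b, e) u → RedCntV t (b + 1, e) u
  | sv {t t₁ u : Lm} {b e : ℕ} :
      StepV .sv t t₁ → RedCntV t₁ (b, e) u → RedCntV t (b, e + 1) u

/-- the CBN embedding into the λ!-calculus -/
def cbn : Lm → Tm
  | .var k => .var k
  | .lam t => .lam (cbn t)
  | .app t u => .app (cbn t) (.bang (cbn u))
  | .esub t u => .esub (cbn t) (.bang (cbn u))

/-- `deBang t = some s'` iff `t = L⟨!s⟩` and `s' = L⟨s⟩` -/
def deBang : Tm → Option Tm
  | .bang s => some s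
  | .esub t e => (deBang t).map (fun s => Tm.esub s e)
  | _ => none

/-- the CBV embedding into the λ!-calculus -/
def cbv : Lm → Tm
  | .var k => .bang (.var k)
  | .lam t => .bang (.lam (cbv t))
  | .app t u =>
      match deBang (cbv t) with
      | some r => Tm.app r (cbv u)
      | none => Tm.app (.der (cbv t)) (cbv u)
  | .esub t u => .esub (cbv t) (cbv u)

/-- Sized typing of system 𝒩 (call-by-name): `DerN Γ t τ n` means that there
is a derivation of `Γ ⊢ t : τ` of size `n` (counting all rules). -/
inductive DerN : Ctx → Lm → Ty → ℕ → Prop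
  | ax (k : ℕ) (σ : Ty) : DerN (Ctx.single k {σ}) (Lm.var k) σ 1
  | app {Γ : Ctx} {t u : Lm} {τ : Ty} {n : ℕ} (prs : List (Ctx × Ty × ℕ)) :
      DerN Γ t (Ty.arr (prs.map (·.2.1)) τ) n →
      (∀ p ∈ prs, DerN p.1 u p.2.1 p.2.2) →
      DerN (Γ + (prs.map (·.1)).sum) (Lm.app t u) τ
           (n + (prs.map (·.2.2)).sum + 1)
  | abs {Γ : Ctx} {t : Lm} {τ : Ty} {n : ℕ} (M : List Ty) :
      DerN Γ t τ n → Multiset.ofList M = Γ 0 →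
      DerN (Ctx.tail Γ) (Lm.lam t) (Ty.arr M τ) (n + 1)
  | es {Γ : Ctx} {t u : Lm} {τ : Ty} {n : ℕ} (prs : List (Ctx × Ty × ℕ)) :
      DerN Γ t τ n →
      Multiset.ofList (prs.map (·.2.1)) = Γ 0 →
      (∀ p ∈ prs, DerN p.1 u p.2.1 p.2.2) →
      DerN (Ctx.tail Γ + (prs.map (·.1)).sum) (Lm.esub t u) τ
           (n + (prs.map (·.2.2)).sum + 1)

/-- Sized typing of system 𝒱 (call-by-value): `DerV Γ t τ n` means that there
is a derivation of `Γ ⊢ t : τ` of size `n` (each rule counts 1, except that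
`ax` counts the cardinal of its multiset and `abs` contributes the sizes of
its premises plus the number of premises). -/
inductive DerV : Ctx → Lm → Ty → ℕ → Prop
  | ax (k : ℕ) (M : List Ty) :
      DerV (Ctx.single k (Multiset.ofList M)) (Lm.var k) (Ty.mult M) M.length
  | es {Γ Δ : Ctx} {t u : Lm} {σ : Ty} {M : List Ty} {n m : ℕ} :
      DerV Γ t σ n → DerV Δ u (Ty.mult M) m → Multiset.ofList M = Γ 0 →
      DerV (Ctx.tail Γ + Δ) (Lm.esub t u) σ (n + m + 1)
  | abs {t : Lm} (prs : List (Ctx × List Ty × Ty × ℕ)) :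
      (∀ p ∈ prs, DerV p.1 t p.2.2.1 p.2.2.2) →
      (∀ p ∈ prs, Multiset.ofList p.2.1 = p.1 0) →
      DerV ((prs.map (fun p => Ctx.tail p.1)).sum) (Lm.lam t)
           (Ty.mult (prs.map (fun p => Ty.arr p.2.1 p.2.2.1)))
           ((prs.map (·.2.2.2)).sum + prs.length)
  | app {Γ Δ : Ctx} {t u : Lm} {M : List Ty} {τ : Ty} {n m : ℕ} :
      DerV Γ t (Ty.mult [Ty.arr M τ]) n → DerV Δ u (Ty.mult M) m →
      DerV (Γ + Δ) (Lm.app t u) τ (n + m + 1)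


/-! Each weak step strictly decreases the size of a typing derivation (subject reduction); for the
`s!` rule this is a weighted substitution lemma, the derivations of `u` replacing the `|M|` axioms
that type `x`. Typings can also be pulled back along steps (subject expansion, through
anti-substitution). By induction on the size, a typable term reduces to a typable term that does
not reduce; such a term has no clash, so it is a clash free normal form. Conversely every clash
free normal form is typable (neutral ones at any type), and subject expansion carries this back.
The size bound follows since each step costs at least one unit and `|p|_w ≤ |Φ|` for every
typing `Φ` of `p`. -/

open Tm

namespace Tm

theorem liftR_comp (f g : ℕ → ℕ) : liftR f ∘ liftR g = liftR (f ∘ g) := by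
  funext k
  cases k <;> rfl

theorem rename_comp (f g : ℕ → ℕ) (t : Tm) : rename f (rename g t) = rename (f ∘ g) t := by
  induction t generalizing f g with
  | var k => rfl
  | app t u iht ihu => simp only [rename, iht, ihu]
  | lam t ih => simp only [rename, ih, liftR_comp]
  | bang t ih => simp only [rename, ih]
  | der t ih => simp only [rename, ih]
  | esub t u iht ihu => simp only [rename, iht, ihu, liftR_comp]

theorem liftR_id : liftR id = id := by
  funext k
  cases k <;> rfl

theorem rename_id (t : Tm) : rename id t = t := by
  induction t with
  | var k => rfl
  | app t u iht ihu => simp only [rename, iht, ihu]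
  | lam t ih => simp only [rename, liftR_id, ih]
  | bang t ih => simp only [rename, ih]
  | der t ih => simp only [rename, ih]
  | esub t u iht ihu => simp only [rename, liftR_id, iht, ihu]

theorem liftR_injective {f : ℕ → ℕ} (hf : Function.Injective f) :
    Function.Injective (liftR f) := by
  rintro (_ | a) (_ | b) h
  · rfl
  · exact absurd h (Nat.succ_ne_zero _).symm
  · exact absurd h (Nat.succ_ne_zero _)
  · exact congrArg (· + 1) (hf (Nat.succ_injective h))

/-- Generalises `substIn n u`, the case `j = 0`, so that the substitution lemma can be proved
under binders. -/
def substOne (j n : ℕ) (u : Tm) : ℕ → Tm := fun k =>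
  if k < j then .var k else if k = j then rename (· + j) u else .var (k - 1 + n)

theorem substOne_of_lt {j k : ℕ} (n : ℕ) (u : Tm) (h : k < j) : substOne j n u k = .var k :=
  if_pos h

theorem substOne_self (j n : ℕ) (u : Tm) : substOne j n u j = rename (· + j) u := by
  simp [substOne]

theorem substOne_of_gt {j k : ℕ} (n : ℕ) (u : Tm) (h : j < k) :
    substOne j n u k = .var (k - 1 + n) := by
  simp [substOne, h.ne', h.not_gt]

theorem liftS_substOne (j n : ℕ) (u : Tm) : liftS (substOne j n u) = substOne (j + 1) n u := by
  funext k
  rcases k with _ | k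
  · rfl
  rcases lt_trichotomy k j with h | rfl | h
  · simp only [liftS, substOne_of_lt n u h, substOne_of_lt n u (Nat.succ_lt_succ h)]; rfl
  · simp only [liftS, substOne_self, rename_comp]
    rfl
  · simp only [liftS, substOne_of_gt n u h, substOne_of_gt n u (Nat.succ_lt_succ h), rename]
    congr 1
    omega

theorem subst_substOne_zero (n : ℕ) (u t : Tm) : subst (substOne 0 n u) t = substIn n u t := by
  congr 1
  funext k
  rcases k with _ | k
  · exact (substOne_self 0 n u).trans (rename_id u)
  · simp [substOne_of_gt n u (Nat.succ_pos k)]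

end Tm

namespace Ctx

noncomputable def ren (f : ℕ → ℕ) : Ctx →+ Ctx where
  toFun Γ := Function.extend f Γ 0
  map_zero' := Function.extend_zero f
  map_add' Γ Δ := by rw [← Function.extend_add, add_zero]

theorem ren_apply {f : ℕ → ℕ} (hf : Function.Injective f) (Γ : Ctx) (j : ℕ) :
    ren f Γ (f j) = Γ j :=
  hf.extend_apply Γ 0 j

theorem ren_apply_of_notMem_range {f : ℕ → ℕ} {k : ℕ} (h : ∀ j, f j ≠ k) (Γ : Ctx) :
    ren f Γ k = 0 :=
  Function.extend_apply' Γ (0 : Ctx) k (not_exists.2 h)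

theorem ren_id (Γ : Ctx) : ren id Γ = Γ :=
  Function.extend_id Γ (0 : Ctx)

theorem ren_add_zero (Γ : Ctx) : ren (· + 0) Γ = Γ :=
  ren_id Γ

theorem ren_comp {f g : ℕ → ℕ} (hf : Function.Injective f) (hg : Function.Injective g)
    (Γ : Ctx) : ren f (ren g Γ) = ren (f ∘ g) Γ :=
  (hg.extend_comp hf Γ (0 : Ctx)).symm

theorem ren_single {f : ℕ → ℕ} (hf : Function.Injective f) (k : ℕ) (M : Multiset Ty) :
    ren f (single k M) = single (f k) M := by
  funext i
  by_cases hi : ∃ j, f j = i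
  · obtain ⟨j, rfl⟩ := hi
    simp [ren_apply hf, single, hf.eq_iff]
  · rw [ren_apply_of_notMem_range (not_exists.1 hi)]
    simp only [single]
    rw [if_neg]
    rintro rfl
    exact hi ⟨k, rfl⟩

theorem ren_liftR_zero {f : ℕ → ℕ} (hf : Function.Injective f) (Γ : Ctx) :
    ren (liftR f) Γ 0 = Γ 0 :=
  ren_apply (liftR_injective hf) Γ 0

theorem tail_add (Γ Δ : Ctx) : tail (Γ + Δ) = tail Γ + tail Δ :=
  rfl

theorem tail_ren_liftR {f : ℕ → ℕ} (hf : Function.Injective f) (Γ : Ctx) :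
    tail (ren (liftR f) Γ) = ren f (tail Γ) := by
  funext k
  by_cases hk : ∃ j, f j = k
  · obtain ⟨j, rfl⟩ := hk
    exact (ren_apply (liftR_injective hf) Γ (j + 1)).trans (ren_apply hf (tail Γ) j).symm
  · rw [ren_apply_of_notMem_range (not_exists.1 hk)]
    refine ren_apply_of_notMem_range ?_ Γ
    rintro (_ | j) hj
    · exact Nat.succ_ne_zero k hj.symm
    · exact hk ⟨j, Nat.succ_injective hj⟩

theorem tail_ren_add_succ (m : ℕ) (Γ : Ctx) : tail (ren (· + (m + 1)) Γ) = ren (· + m) Γ := by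
  funext k
  by_cases hk : ∃ j, j + m = k
  · obtain ⟨j, rfl⟩ := hk
    exact (ren_apply (add_left_injective _) Γ j).trans (ren_apply (add_left_injective _) Γ j).symm
  · rw [ren_apply_of_notMem_range (not_exists.1 hk)]
    exact ren_apply_of_notMem_range (fun j hj => hk ⟨j, by omega⟩) Γ

theorem tail_ren_add_one (Γ : Ctx) : tail (ren (· + 1) Γ) = Γ :=
  (tail_ren_add_succ 0 Γ).trans (ren_add_zero Γ)

theorem ren_add_comp_ren_add_one (m : ℕ) (C : Ctx) :
    ren (· + m) (ren (· + 1) C) = ren (· + (m + 1)) C := by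
  rw [ren_comp (add_left_injective _) (add_left_injective _)]
  congr 2
  funext x
  exact Nat.add_right_comm x 1 m

theorem ren_add_succ_zero (m : ℕ) (Γ : Ctx) : ren (· + (m + 1)) Γ 0 = 0 :=
  ren_apply_of_notMem_range (fun j => by omega) Γ

/-- The context of `subst (substOne j n u) t`, up to the contribution of `u`, in terms of the
context of `t`. -/
def eraseAt (j n : ℕ) : Ctx →+ Ctx where
  toFun Γ i := if i < j then Γ i else if j + n ≤ i then Γ (i + 1 - n) else 0
  map_zero' := by funext i; simp
  map_add' Γ Δ := by funext i; simp only [Pi.add_apply]; split_ifs <;> simp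

theorem eraseAt_apply (j n : ℕ) (Γ : Ctx) (i : ℕ) :
    eraseAt j n Γ i = if i < j then Γ i else if j + n ≤ i then Γ (i + 1 - n) else 0 :=
  rfl

theorem eraseAt_single_self (j n : ℕ) (M : Multiset Ty) : eraseAt j n (single j M) = 0 := by
  funext i
  simp only [eraseAt_apply, single, Pi.zero_apply]
  split_ifs <;> first | rfl | omega

theorem eraseAt_single_of_lt {k j : ℕ} (n : ℕ) (h : k < j) (M : Multiset Ty) :
    eraseAt j n (single k M) = single k M := by
  funext i
  simp only [eraseAt_apply, single]
  split_ifs <;> first | rfl | omega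

theorem eraseAt_single_of_gt {k j : ℕ} (n : ℕ) (h : j < k) (M : Multiset Ty) :
    eraseAt j n (single k M) = single (k - 1 + n) M := by
  funext i
  simp only [eraseAt_apply, single]
  split_ifs <;> first | rfl | omega

theorem tail_eraseAt (j n : ℕ) (Γ : Ctx) :
    tail (eraseAt (j + 1) n Γ) = eraseAt j n (tail Γ) := by
  funext i
  simp only [tail, eraseAt_apply]
  split_ifs <;> first | rfl | omega | (congr 1; omega)

theorem eraseAt_succ_apply_zero (j n : ℕ) (Γ : Ctx) : eraseAt (j + 1) n Γ 0 = Γ 0 :=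
  by simp [eraseAt_apply]

theorem eraseAt_zero (n : ℕ) (Γ : Ctx) : eraseAt 0 n Γ = ren (· + n) (tail Γ) := by
  funext i
  by_cases hi : n ≤ i
  · obtain ⟨d, rfl⟩ := Nat.exists_eq_add_of_le' hi
    rw [ren_apply (add_left_injective n), eraseAt_apply, if_neg (by omega), if_pos (by omega)]
    simp only [tail]
    congr 1
    omega
  · rw [ren_apply_of_notMem_range (fun l hl => by omega), eraseAt_apply, if_neg (by omega),
      if_neg (by omega)]

end Ctx

/-- The premises of a rule (bg) deriving `Δ ⊢ !u : M` of size `S`, forgetting their order. -/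
inductive Bundle (u : Tm) : Multiset Ty → Ctx → ℕ → Prop
  | nil : Bundle u 0 0 0
  | cons {τ : Ty} {M : Multiset Ty} {Γ Δ : Ctx} {n S : ℕ} :
      DerU Γ u τ n → Bundle u M Δ S → Bundle u (τ ::ₘ M) (Γ + Δ) (n + S)

namespace Bundle

variable {u : Tm}

theorem zero_inv {Δ : Ctx} {S : ℕ} (h : Bundle u 0 Δ S) : Δ = 0 ∧ S = 0 := by
  generalize hM : (0 : Multiset Ty) = M at h
  cases h with
  | nil => exact ⟨rfl, rfl⟩
  | cons => exact absurd hM.symm (Multiset.cons_ne_zero)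

theorem add {M₁ M₂ : Multiset Ty} {Δ₁ Δ₂ : Ctx} {S₁ S₂ : ℕ}
    (h₁ : Bundle u M₁ Δ₁ S₁) (h₂ : Bundle u M₂ Δ₂ S₂) :
    Bundle u (M₁ + M₂) (Δ₁ + Δ₂) (S₁ + S₂) := by
  induction h₁ with
  | nil => simpa using h₂
  | cons d _ ih =>
      rw [Multiset.cons_add, add_assoc, add_assoc]
      exact cons d ih

theorem cons_inv {τ : Ty} {M : Multiset Ty} {Δ : Ctx} {S : ℕ} (h : Bundle u (τ ::ₘ M) Δ S) :
    ∃ Γ n Δ' S', DerU Γ u τ n ∧ Bundle u M Δ' S' ∧ Δ = Γ + Δ' ∧ S = n + S' := by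
  generalize hM : τ ::ₘ M = M₀ at h
  induction h generalizing τ M with
  | nil => exact absurd hM Multiset.cons_ne_zero
  | @cons τ' M' Γ Δ' n S' d hb ih =>
      rcases Multiset.cons_eq_cons.mp hM with ⟨rfl, rfl⟩ | ⟨-, M₀, rfl, rfl⟩
      · exact ⟨Γ, n, Δ', S', d, hb, rfl, rfl⟩
      · obtain ⟨Γ₂, n₂, Δ₂, S₂, d₂, hb₂, rfl, rfl⟩ := ih rfl
        exact ⟨Γ₂, n₂, Γ + Δ₂, n + S₂, d₂, cons d hb₂, add_left_comm _ _ _, by omega⟩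

theorem add_inv {M₁ M₂ : Multiset Ty} {Δ : Ctx} {S : ℕ} (h : Bundle u (M₁ + M₂) Δ S) :
    ∃ Δ₁ S₁ Δ₂ S₂, Bundle u M₁ Δ₁ S₁ ∧ Bundle u M₂ Δ₂ S₂ ∧ Δ = Δ₁ + Δ₂ ∧ S = S₁ + S₂ := by
  induction M₁ using Multiset.induction generalizing Δ S with
  | empty => exact ⟨0, 0, Δ, S, nil, by simpa using h, by simp, by simp⟩
  | cons τ M₁ ih =>
      rw [Multiset.cons_add] at h
      obtain ⟨Γ, n, Δ', S', d, hb, rfl, rfl⟩ := h.cons_inv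
      obtain ⟨Δ₁, S₁, Δ₂, S₂, h₁, h₂, rfl, rfl⟩ := ih hb
      exact ⟨Γ + Δ₁, n + S₁, Δ₂, S₂, cons d h₁, h₂, by rw [add_assoc], by omega⟩

theorem singleton {Γ : Ctx} {τ : Ty} {n : ℕ} (d : DerU Γ u τ n) : Bundle u {τ} Γ n := by
  simpa using cons d nil

theorem singleton_inv {Γ : Ctx} {τ : Ty} {n : ℕ} (h : Bundle u {τ} Γ n) : DerU Γ u τ n := by
  obtain ⟨Γ', n', Δ, S, d, hb, rfl, rfl⟩ := cons_inv h
  obtain ⟨rfl, rfl⟩ := hb.zero_inv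
  simpa using d

theorem map {t t' : Tm} (F : Ctx →+ Ctx)
    (hF : ∀ {Γ τ n}, DerU Γ t τ n → DerU (F Γ) t' τ n)
    {M : Multiset Ty} {Δ : Ctx} {S : ℕ} (h : Bundle t M Δ S) : Bundle t' M (F Δ) S := by
  induction h with
  | nil => simpa using nil
  | cons d _ ih => simpa using cons (hF d) ih

theorem pullback {t t' : Tm} (F : Ctx →+ Ctx)
    (hF : ∀ {Γ' τ n}, DerU Γ' t' τ n → ∃ Γ, Γ' = F Γ ∧ DerU Γ t τ n)
    {M : Multiset Ty} {Δ' : Ctx} {S : ℕ} (h : Bundle t' M Δ' S) :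
    ∃ Δ, Δ' = F Δ ∧ Bundle t M Δ S := by
  induction h with
  | nil => exact ⟨0, (map_zero F).symm, nil⟩
  | cons d _ ih =>
      obtain ⟨Γ, rfl, d'⟩ := hF d
      obtain ⟨Δ, rfl, hb⟩ := ih
      exact ⟨Γ + Δ, (map_add F Γ Δ).symm, cons d' hb⟩

theorem of_list (prs : List (Ctx × Ty × ℕ)) (h : ∀ p ∈ prs, DerU p.1 u p.2.1 p.2.2) :
    Bundle u (prs.map (·.2.1)) (prs.map (·.1)).sum (prs.map (·.2.2)).sum := by
  induction prs with
  | nil => exact nil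
  | cons p prs ih =>
      simpa using cons (h p List.mem_cons_self) (ih fun q hq => h q (List.mem_cons_of_mem p hq))

end Bundle

theorem DerU.bang_cons {Γ Δ : Ctx} {u : Tm} {τ : Ty} {l : List Ty} {n S : ℕ}
    (d : DerU Γ u τ n) (h : DerU Δ (bang u) (Ty.mult l) S) :
    DerU (Γ + Δ) (bang u) (Ty.mult (τ :: l)) (n + S) := by
  cases h with
  | bg prs hprs =>
      simpa using DerU.bg ((Γ, τ, n) :: prs) fun p hp => by
        rcases List.mem_cons.mp hp with rfl | hp
        exacts [d, hprs p hp]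

theorem derU_bang_iff {Δ : Ctx} {u : Tm} {l : List Ty} {S : ℕ} :
    DerU Δ (bang u) (Ty.mult l) S ↔ Bundle u l Δ S := by
  constructor
  · rintro (_ | _ | _ | _ | ⟨prs, hprs⟩ | _)
    exact Bundle.of_list prs hprs
  · induction l generalizing Δ S with
    | nil =>
        intro h
        obtain ⟨rfl, rfl⟩ := h.zero_inv
        simpa using DerU.bg (t := u) [] (by simp)
    | cons τ l ih =>
        intro h
        obtain ⟨Γ, n, Δ', S', d, hb, rfl, rfl⟩ := Bundle.cons_inv (M := l) h
        exact d.bang_cons (ih hb)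

theorem DerU.bang_inv {Δ : Ctx} {u : Tm} {σ : Ty} {S : ℕ} (h : DerU Δ (bang u) σ S) :
    ∃ l, σ = Ty.mult l ∧ Bundle u l Δ S := by
  cases h with
  | bg prs hprs => exact ⟨_, rfl, derU_bang_iff.1 (DerU.bg prs hprs)⟩

theorem DerU.rename {f : ℕ → ℕ} (hf : Function.Injective f) {t : Tm} {Γ : Ctx} {σ : Ty}
    {n : ℕ} (h : DerU Γ t σ n) : DerU (Ctx.ren f Γ) (rename f t) σ n := by
  induction t generalizing f Γ σ n with
  | var k =>
      cases h
      rw [Ctx.ren_single hf]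
      exact .ax (f k) σ
  | app t u iht ihu =>
      cases h with
      | app h₁ h₂ => rw [map_add]; exact .app (iht hf h₁) (ihu hf h₂)
  | lam t ih =>
      cases h with
      | abs M h hM =>
          rw [← Ctx.tail_ren_liftR hf]
          exact .abs M (ih (liftR_injective hf) h) (by rw [hM, Ctx.ren_liftR_zero hf])
  | bang t ih =>
      obtain ⟨l, rfl, hb⟩ := h.bang_inv
      exact derU_bang_iff.2 (hb.map _ (ih hf))
  | der t ih =>
      cases h with
      | dr h => exact .dr (ih hf h)
  | esub t u iht ihu =>
      cases h with
      | es h₁ h₂ hM =>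
          rw [map_add, ← Ctx.tail_ren_liftR hf]
          exact .es (iht (liftR_injective hf) h₁) (ihu hf h₂) (by rw [hM, Ctx.ren_liftR_zero hf])

theorem DerU.of_rename {f : ℕ → ℕ} (hf : Function.Injective f) {t : Tm} {Γ' : Ctx} {σ : Ty}
    {n : ℕ} (h : DerU Γ' (Tm.rename f t) σ n) : ∃ Γ, Γ' = Ctx.ren f Γ ∧ DerU Γ t σ n := by
  induction t generalizing f Γ' σ n with
  | var k =>
      cases h
      exact ⟨_, (Ctx.ren_single hf k _).symm, .ax k σ⟩
  | app t u iht ihu =>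
      cases h with
      | app h₁ h₂ =>
          obtain ⟨Γ₁, rfl, d₁⟩ := iht hf h₁
          obtain ⟨Γ₂, rfl, d₂⟩ := ihu hf h₂
          exact ⟨Γ₁ + Γ₂, (map_add _ Γ₁ Γ₂).symm, .app d₁ d₂⟩
  | lam t ih =>
      cases h with
      | abs M h hM =>
          obtain ⟨Γ, rfl, d⟩ := ih (liftR_injective hf) h
          exact ⟨_, Ctx.tail_ren_liftR hf Γ, .abs M d (by rw [hM, Ctx.ren_liftR_zero hf])⟩
  | bang t ih =>
      obtain ⟨l, rfl, hb⟩ := h.bang_inv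
      obtain ⟨Γ, rfl, hb'⟩ := hb.pullback _ (ih hf)
      exact ⟨Γ, rfl, derU_bang_iff.2 hb'⟩
  | der t ih =>
      cases h with
      | dr h =>
          obtain ⟨Γ, rfl, d⟩ := ih hf h
          exact ⟨Γ, rfl, .dr d⟩
  | esub t u iht ihu =>
      cases h with
      | es h₁ h₂ hM =>
          obtain ⟨Γ, rfl, d₁⟩ := iht (liftR_injective hf) h₁
          obtain ⟨Δ, rfl, d₂⟩ := ihu hf h₂
          exact ⟨Ctx.tail Γ + Δ, by rw [map_add, Ctx.tail_ren_liftR hf],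
            .es d₁ d₂ (by rw [hM, Ctx.ren_liftR_zero hf])⟩

section Substitution

variable {n : ℕ} {u : Tm}

theorem Bundle.subst_substOne {t : Tm} {j : ℕ}
    (ih : ∀ {Γ σ m Δ S}, DerU Γ t σ m → Bundle u (Γ j) Δ S →
      ∃ m', DerU (Ctx.eraseAt j n Γ + Ctx.ren (· + j) Δ) (subst (substOne j n u) t) σ m' ∧
        m' + Multiset.card (Γ j) = m + S)
    {M : Multiset Ty} {Γ : Ctx} {m : ℕ} (h : Bundle t M Γ m) :
    ∀ {Δ S}, Bundle u (Γ j) Δ S →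
      ∃ m', Bundle (subst (substOne j n u) t) M (Ctx.eraseAt j n Γ + Ctx.ren (· + j) Δ) m' ∧
        m' + Multiset.card (Γ j) = m + S := by
  induction h with
  | nil =>
      intro Δ S hu
      obtain ⟨rfl, rfl⟩ := hu.zero_inv
      exact ⟨0, by simpa using Bundle.nil, rfl⟩
  | @cons τ M Γ₁ Γ₂ m₁ m₂ d _ ihb =>
      intro Δ S hu
      obtain ⟨Δ₁, S₁, Δ₂, S₂, hu₁, hu₂, rfl, rfl⟩ := Bundle.add_inv (M₁ := Γ₁ j) hu
      obtain ⟨m₁', d', e₁⟩ := ih d hu₁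
      obtain ⟨m₂', hb', e₂⟩ := ihb hu₂
      refine ⟨m₁' + m₂', ?_, ?_⟩
      · rw [map_add, map_add, add_add_add_comm]
        exact .cons d' hb'
      · rw [Pi.add_apply, Multiset.card_add]
        omega

theorem DerU.subst_substOne {t : Tm} {j : ℕ} {Γ : Ctx} {σ : Ty} {m : ℕ} {Δ : Ctx} {S : ℕ}
    (h : DerU Γ t σ m) (hu : Bundle u (Γ j) Δ S) :
    ∃ m', DerU (Ctx.eraseAt j n Γ + Ctx.ren (· + j) Δ) (subst (substOne j n u) t) σ m' ∧
      m' + Multiset.card (Γ j) = m + S := by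
  induction t generalizing j Γ σ m Δ S with
  | var k =>
      cases h
      rcases lt_trichotomy k j with hkj | rfl | hkj
      · obtain ⟨rfl, rfl⟩ := Bundle.zero_inv (by simpa [Ctx.single, hkj.ne'] using hu)
        refine ⟨1, ?_, by simp [Ctx.single, hkj.ne']⟩
        rw [map_zero, add_zero, Ctx.eraseAt_single_of_lt n hkj]
        simpa only [subst, substOne_of_lt n u hkj] using DerU.ax k σ
      · have d := Bundle.singleton_inv (by simpa [Ctx.single] using hu)
        refine ⟨S, ?_, by simp [Ctx.single, add_comm]⟩
        rw [Ctx.eraseAt_single_self, zero_add]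
        simpa only [subst, substOne_self] using d.rename (add_left_injective k)
      · obtain ⟨rfl, rfl⟩ := Bundle.zero_inv (by simpa [Ctx.single, hkj.ne] using hu)
        refine ⟨1, ?_, by simp [Ctx.single, hkj.ne]⟩
        rw [map_zero, add_zero, Ctx.eraseAt_single_of_gt n hkj]
        simpa only [subst, substOne_of_gt n u hkj] using DerU.ax (k - 1 + n) σ
  | app t₁ t₂ ih₁ ih₂ =>
      cases h with
      | @app Γ₁ Γ₂ _ _ _ _ m₁ m₂ h₁ h₂ =>
          obtain ⟨Δ₁, S₁, Δ₂, S₂, hu₁, hu₂, rfl, rfl⟩ := Bundle.add_inv (M₁ := Γ₁ j) hu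
          obtain ⟨m₁', d₁, e₁⟩ := ih₁ h₁ hu₁
          obtain ⟨m₂', d₂, e₂⟩ := ih₂ h₂ hu₂
          refine ⟨m₁' + m₂' + 1, ?_, ?_⟩
          · rw [map_add, map_add, add_add_add_comm]
            exact .app d₁ d₂
          · rw [Pi.add_apply, Multiset.card_add]
            omega
  | lam t ih =>
      cases h with
      | @abs Γ₁ _ τ m₁ M h₁ hM =>
          obtain ⟨m', d, e⟩ := ih (j := j + 1) h₁ hu
          refine ⟨m' + 1, ?_, by simp only [Ctx.tail] at e ⊢; omega⟩
          have habs := DerU.abs M d (by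
            rw [hM, Pi.add_apply, Ctx.eraseAt_succ_apply_zero, Ctx.ren_add_succ_zero, add_zero])
          rw [Ctx.tail_add, Ctx.tail_eraseAt, Ctx.tail_ren_add_succ] at habs
          simpa only [subst, liftS_substOne] using habs
  | bang t ih =>
      obtain ⟨l, rfl, hb⟩ := h.bang_inv
      obtain ⟨m', hb', e⟩ := hb.subst_substOne ih hu
      exact ⟨m', derU_bang_iff.2 hb', e⟩
  | der t ih =>
      cases h with
      | dr h₁ =>
          obtain ⟨m', d, e⟩ := ih h₁ hu
          exact ⟨m' + 1, .dr d, by omega⟩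
  | esub t₁ t₂ ih₁ ih₂ =>
      cases h with
      | @es Γ₁ Γ₂ _ _ _ M m₁ m₂ h₁ h₂ hM =>
          obtain ⟨Δ₁, S₁, Δ₂, S₂, hu₁, hu₂, rfl, rfl⟩ :=
            Bundle.add_inv (M₁ := Γ₁ (j + 1)) hu
          obtain ⟨m₁', d₁, e₁⟩ := ih₁ (j := j + 1) h₁ hu₁
          obtain ⟨m₂', d₂, e₂⟩ := ih₂ h₂ hu₂
          refine ⟨m₁' + m₂' + 1, ?_, ?_⟩
          · have hes := DerU.es d₁ d₂ (by
              rw [hM, Pi.add_apply, Ctx.eraseAt_succ_apply_zero, Ctx.ren_add_succ_zero,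
                add_zero])
            rw [Ctx.tail_add, Ctx.tail_eraseAt, Ctx.tail_ren_add_succ] at hes
            rw [map_add, map_add, add_add_add_comm]
            simpa only [subst, liftS_substOne] using hes
          · rw [Pi.add_apply, Multiset.card_add]
            simp only [Ctx.tail]
            omega

theorem Bundle.of_subst_substOne {t : Tm} {j : ℕ}
    (ih : ∀ {Γ' σ m'}, DerU Γ' (subst (substOne j n u) t) σ m' →
      ∃ Γ Δ m S, DerU Γ t σ m ∧ Bundle u (Γ j) Δ S ∧
        Γ' = Ctx.eraseAt j n Γ + Ctx.ren (· + j) Δ)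
    {M : Multiset Ty} {Γ' : Ctx} {m' : ℕ} (h : Bundle (subst (substOne j n u) t) M Γ' m') :
    ∃ Γ Δ m S, Bundle t M Γ m ∧ Bundle u (Γ j) Δ S ∧
      Γ' = Ctx.eraseAt j n Γ + Ctx.ren (· + j) Δ := by
  induction h with
  | nil => exact ⟨0, 0, 0, 0, .nil, .nil, by simp⟩
  | cons d _ ihb =>
      obtain ⟨Γ₁, Δ₁, m₁, S₁, d₁, hu₁, rfl⟩ := ih d
      obtain ⟨Γ₂, Δ₂, m₂, S₂, hb₂, hu₂, rfl⟩ := ihb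
      exact ⟨Γ₁ + Γ₂, Δ₁ + Δ₂, _, _, .cons d₁ hb₂, hu₁.add hu₂,
        by rw [map_add, map_add, add_add_add_comm]⟩

theorem DerU.of_subst_substOne {t : Tm} {j : ℕ} {Γ' : Ctx} {σ : Ty} {m' : ℕ}
    (h : DerU Γ' (subst (substOne j n u) t) σ m') :
    ∃ Γ Δ m S, DerU Γ t σ m ∧ Bundle u (Γ j) Δ S ∧
      Γ' = Ctx.eraseAt j n Γ + Ctx.ren (· + j) Δ := by
  induction t generalizing j Γ' σ m' with
  | var k =>
      rcases lt_trichotomy k j with hkj | rfl | hkj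
      · rw [subst, substOne_of_lt n u hkj] at h
        cases h
        refine ⟨_, 0, 1, 0, .ax k σ, by simpa [Ctx.single, hkj.ne'] using Bundle.nil, ?_⟩
        rw [Ctx.eraseAt_single_of_lt n hkj, map_zero, add_zero]
      · rw [subst, substOne_self] at h
        obtain ⟨Δ, rfl, d⟩ := h.of_rename (add_left_injective k)
        refine ⟨_, Δ, 1, m', .ax k σ, by simpa [Ctx.single] using Bundle.singleton d, ?_⟩
        rw [Ctx.eraseAt_single_self, zero_add]
      · rw [subst, substOne_of_gt n u hkj] at h
        cases h
        refine ⟨_, 0, 1, 0, .ax k σ, by simpa [Ctx.single, hkj.ne] using Bundle.nil, ?_⟩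
        rw [Ctx.eraseAt_single_of_gt n hkj, map_zero, add_zero]
  | app t₁ t₂ ih₁ ih₂ =>
      cases h with
      | app h₁ h₂ =>
          obtain ⟨Γ₁, Δ₁, m₁, S₁, d₁, hu₁, rfl⟩ := ih₁ h₁
          obtain ⟨Γ₂, Δ₂, m₂, S₂, d₂, hu₂, rfl⟩ := ih₂ h₂
          exact ⟨Γ₁ + Γ₂, Δ₁ + Δ₂, _, _, .app d₁ d₂, hu₁.add hu₂,
            by rw [map_add, map_add, add_add_add_comm]⟩
  | lam t ih =>
      rw [subst, liftS_substOne] at h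
      cases h with
      | abs M h₁ hM =>
          obtain ⟨Γ, Δ, m, S, d, hu, rfl⟩ := ih h₁
          refine ⟨Ctx.tail Γ, Δ, m + 1, S, ?_, hu, ?_⟩
          · exact .abs M d (by
              rw [hM, Pi.add_apply, Ctx.eraseAt_succ_apply_zero, Ctx.ren_add_succ_zero, add_zero])
          · rw [Ctx.tail_add, Ctx.tail_eraseAt, Ctx.tail_ren_add_succ]
  | bang t ih =>
      obtain ⟨l, rfl, hb⟩ := h.bang_inv
      obtain ⟨Γ, Δ, m, S, hb', hu, rfl⟩ := hb.of_subst_substOne ih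
      exact ⟨Γ, Δ, m, S, derU_bang_iff.2 hb', hu, rfl⟩
  | der t ih =>
      cases h with
      | dr h₁ =>
          obtain ⟨Γ, Δ, m, S, d, hu, rfl⟩ := ih h₁
          exact ⟨Γ, Δ, m + 1, S, .dr d, hu, rfl⟩
  | esub t₁ t₂ ih₁ ih₂ =>
      rw [subst, liftS_substOne] at h
      cases h with
      | es h₁ h₂ hM =>
          obtain ⟨Γ₁, Δ₁, m₁, S₁, d₁, hu₁, rfl⟩ := ih₁ h₁
          obtain ⟨Γ₂, Δ₂, m₂, S₂, d₂, hu₂, rfl⟩ := ih₂ h₂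
          refine ⟨Ctx.tail Γ₁ + Γ₂, Δ₁ + Δ₂, m₁ + m₂ + 1, S₁ + S₂, ?_, hu₁.add hu₂, ?_⟩
          · exact .es d₁ d₂ (by
              rw [hM, Pi.add_apply, Ctx.eraseAt_succ_apply_zero, Ctx.ren_add_succ_zero, add_zero])
          · rw [Ctx.tail_add, Ctx.tail_eraseAt, Ctx.tail_ren_add_succ, map_add, map_add,
              add_add_add_comm]

end Substitution

/-- `PlugTyping L Γs Γ k`: typings of the explicit substitutions of the list context `L` which
turn a typing of the hole in context `Γs` into one of `L⟨·⟩` in context `Γ`, adding `k` to its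
size. -/
inductive PlugTyping : List Tm → Ctx → Ctx → ℕ → Prop
  | nil (Γ : Ctx) : PlugTyping [] Γ Γ 0
  | cons {L : List Tm} {Γs Γ Δ : Ctx} {e : Tm} {M : List Ty} {k m : ℕ} :
      PlugTyping L Γs Γ k → DerU Δ e (Ty.mult M) m → Multiset.ofList M = Γ 0 →
      PlugTyping (e :: L) Γs (Ctx.tail Γ + Δ) (k + m + 1)

theorem DerU.plug_inv {L : List Tm} {s : Tm} {Γ : Ctx} {σ : Ty} {m : ℕ}
    (h : DerU Γ (plug L s) σ m) : ∃ Γs k ms, PlugTyping L Γs Γ k ∧ DerU Γs s σ ms ∧ m = ms + k := by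
  induction L generalizing Γ σ m with
  | nil => exact ⟨Γ, 0, m, .nil Γ, h, rfl⟩
  | cons e L ih =>
      cases h with
      | es h₁ h₂ hM =>
          obtain ⟨Γs, k, ms, hL, hs, rfl⟩ := ih h₁
          exact ⟨Γs, _, ms, .cons hL h₂ hM, hs, by omega⟩

namespace PlugTyping

theorem derU_plug {L : List Tm} {Γs Γ : Ctx} {k : ℕ} (hL : PlugTyping L Γs Γ k) {s : Tm} {σ : Ty}
    {ms : ℕ} (h : DerU Γs s σ ms) : DerU Γ (plug L s) σ (ms + k) := by
  induction hL generalizing ms with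
  | nil => exact h
  | cons _ h₂ hM ih => simpa only [plug, ← add_assoc] using DerU.es (ih h) h₂ hM

theorem add_ren {L : List Tm} {Γs Γ : Ctx} {k : ℕ} (hL : PlugTyping L Γs Γ k) (C : Ctx) :
    PlugTyping L (Γs + Ctx.ren (· + L.length) C) (Γ + C) k := by
  induction hL generalizing C with
  | nil Γ => simpa only [List.length_nil, Ctx.ren_add_zero] using nil (Γ + C)
  | @cons L Γs Γ Δ e M k m _ h₂ hM ih =>
      have := cons (ih (Ctx.ren (· + 1) C)) h₂
        (by rw [hM, Pi.add_apply, Ctx.ren_add_succ_zero 0, add_zero])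
      rwa [Ctx.tail_add, Ctx.tail_ren_add_one, add_right_comm, Ctx.ren_add_comp_ren_add_one,
        ← List.length_cons (a := e)] at this

theorem of_add_ren {L : List Tm} {Γs' Γ' : Ctx} {k : ℕ} (hL : PlugTyping L Γs' Γ' k)
    {Γs C : Ctx} (hΓs : Γs' = Γs + Ctx.ren (· + L.length) C) :
    ∃ Γ, PlugTyping L Γs Γ k ∧ Γ' = Γ + C := by
  induction hL generalizing Γs C with
  | nil => exact ⟨Γs, nil Γs, by simpa only [List.length_nil, Ctx.ren_add_zero] using hΓs⟩
  | @cons L _ Γ Δ e M k m _ h₂ hM ih =>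
      obtain ⟨Γ₀, hL₀, rfl⟩ :=
        ih (C := Ctx.ren (· + 1) C) (by rw [hΓs, Ctx.ren_add_comp_ren_add_one, List.length_cons])
      refine ⟨Ctx.tail Γ₀ + Δ, cons hL₀ h₂ ?_, ?_⟩
      · rw [hM, Pi.add_apply, Ctx.ren_add_succ_zero 0, add_zero]
      · rw [Ctx.tail_add, Ctx.tail_ren_add_one, add_right_comm]

end PlugTyping

theorem Root.subject_reduction {r : Rule} {t t' : Tm} (hr : Root r t t') {Γ : Ctx} {σ : Ty}
    {m : ℕ} (h : DerU Γ t σ m) : ∃ m', DerU Γ t' σ m' ∧ m' < m := by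
  cases hr with
  | dB L t u =>
      cases h with
      | app h₁ h₂ =>
          obtain ⟨Γs, k, ms, hL, hs, rfl⟩ := h₁.plug_inv
          cases hs with
          | abs M hd hM =>
              have hes := DerU.es hd (h₂.rename (add_left_injective L.length)) hM
              exact ⟨_, (hL.add_ren _).derU_plug hes, by omega⟩
  | sb L t u =>
      cases h with
      | @es Γt _ _ _ _ M n _ ht hb hM =>
          obtain ⟨Γs, k, ms, hL, hs, rfl⟩ := hb.plug_inv
          have hu : Bundle u (Γt 0) Γs ms := hM ▸ derU_bang_iff.1 hs
          obtain ⟨m', d, e⟩ := ht.subst_substOne (j := 0) (n := L.length) hu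
          rw [Ctx.eraseAt_zero, Ctx.ren_add_zero, subst_substOne_zero, add_comm] at d
          refine ⟨m' + k, ?_, by omega⟩
          rw [add_comm]
          exact (hL.add_ren _).derU_plug d
  | db L t =>
      cases h with
      | dr hd =>
          obtain ⟨Γs, k, ms, hL, hs, rfl⟩ := hd.plug_inv
          exact ⟨ms + k, hL.derU_plug (Bundle.singleton_inv (derU_bang_iff.1 hs)), by omega⟩

theorem Root.subject_expansion {r : Rule} {t t' : Tm} (hr : Root r t t') {Γ : Ctx} {σ : Ty}
    {m' : ℕ} (h : DerU Γ t' σ m') : ∃ m, DerU Γ t σ m := by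
  cases hr with
  | dB L t u =>
      obtain ⟨A, k, ms, hL, hs, rfl⟩ := h.plug_inv
      cases hs with
      | es dt du' hM =>
          obtain ⟨Δ, rfl, du⟩ := du'.of_rename (add_left_injective L.length)
          obtain ⟨Γ', hL', rfl⟩ := hL.of_add_ren rfl
          exact ⟨_, .app (hL'.derU_plug (.abs _ dt hM)) du⟩
  | sb L t u =>
      obtain ⟨A, k, ms, hL, hs, rfl⟩ := h.plug_inv
      rw [← subst_substOne_zero] at hs
      obtain ⟨Γt, Δ, mt, S, dt, hu, hA⟩ := hs.of_subst_substOne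
      rw [Ctx.eraseAt_zero, Ctx.ren_add_zero, add_comm] at hA
      obtain ⟨Γ', hL', rfl⟩ := hL.of_add_ren hA
      have hb : DerU Δ (bang u) (Ty.mult (Γt 0).toList) S := by
        rwa [derU_bang_iff, Multiset.coe_toList]
      rw [add_comm]
      exact ⟨_, .es dt (hL'.derU_plug hb) (Multiset.coe_toList _)⟩
  | db L t =>
      obtain ⟨A, k, ms, hL, hs, rfl⟩ := h.plug_inv
      exact ⟨_, .dr (hL.derU_plug (derU_bang_iff.2 (Bundle.singleton hs)))⟩

theorem Step.subject_reduction {r : Rule} {t t' : Tm} (hs : Step r t t') {Γ : Ctx} {σ : Ty}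
    {m : ℕ} (h : DerU Γ t σ m) : ∃ m', DerU Γ t' σ m' ∧ m' < m := by
  induction hs generalizing Γ σ m with
  | root hr => exact hr.subject_reduction h
  | appL u _ ih =>
      cases h with
      | app h₁ h₂ => obtain ⟨_, d, e⟩ := ih h₁; exact ⟨_, .app d h₂, by omega⟩
  | appR t _ ih =>
      cases h with
      | app h₁ h₂ => obtain ⟨_, d, e⟩ := ih h₂; exact ⟨_, .app h₁ d, by omega⟩
  | lam _ ih =>
      cases h with
      | abs M h₁ hM => obtain ⟨_, d, e⟩ := ih h₁; exact ⟨_, .abs M d hM, by omega⟩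
  | der _ ih =>
      cases h with
      | dr h₁ => obtain ⟨_, d, e⟩ := ih h₁; exact ⟨_, .dr d, by omega⟩
  | esubL u _ ih =>
      cases h with
      | es h₁ h₂ hM => obtain ⟨_, d, e⟩ := ih h₁; exact ⟨_, .es d h₂ hM, by omega⟩
  | esubR t _ ih =>
      cases h with
      | es h₁ h₂ hM => obtain ⟨_, d, e⟩ := ih h₂; exact ⟨_, .es h₁ d hM, by omega⟩

theorem Step.subject_expansion {r : Rule} {t t' : Tm} (hs : Step r t t') {Γ : Ctx} {σ : Ty}
    {m' : ℕ} (h : DerU Γ t' σ m') : ∃ m, DerU Γ t σ m := by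
  induction hs generalizing Γ σ m' with
  | root hr => exact hr.subject_expansion h
  | appL u _ ih =>
      cases h with
      | app h₁ h₂ => obtain ⟨_, d⟩ := ih h₁; exact ⟨_, .app d h₂⟩
  | appR t _ ih =>
      cases h with
      | app h₁ h₂ => obtain ⟨_, d⟩ := ih h₂; exact ⟨_, .app h₁ d⟩
  | lam _ ih =>
      cases h with
      | abs M h₁ hM => obtain ⟨_, d⟩ := ih h₁; exact ⟨_, .abs M d hM⟩
  | der _ ih =>
      cases h with
      | dr h₁ => obtain ⟨_, d⟩ := ih h₁; exact ⟨_, .dr d⟩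
  | esubL u _ ih =>
      cases h with
      | es h₁ h₂ hM => obtain ⟨_, d⟩ := ih h₁; exact ⟨_, .es d h₂ hM⟩
  | esubR t _ ih =>
      cases h with
      | es h₁ h₂ hM => obtain ⟨_, d⟩ := ih h₂; exact ⟨_, .es h₁ d hM⟩

theorem NaCF.neCF_or_plug_bang : ∀ {t : Tm}, NaCF t → NeCF t ∨ ∃ L s, t = plug L (Tm.bang s)
  | _, .bang s => .inr ⟨[], s, rfl⟩
  | _, .ne h => .inl h
  | _, .esub (u := u) h₁ h₂ => h₁.neCF_or_plug_bang.elim (fun h => .inl (.esub h h₂))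
      fun ⟨L, s, e⟩ => .inr ⟨u :: L, s, by rw [e]; rfl⟩

theorem NbCF.neCF_or_plug_lam : ∀ {t : Tm}, NbCF t → NeCF t ∨ ∃ L s, t = plug L (Tm.lam s)
  | _, .lam (t := s) _ => .inr ⟨[], s, rfl⟩
  | _, .ne h => .inl h
  | _, .esub (u := u) h₁ h₂ => h₁.neCF_or_plug_lam.elim (fun h => .inl (.esub h h₂))
      fun ⟨L, s, e⟩ => .inr ⟨u :: L, s, by rw [e]; rfl⟩

theorem NoCF.naCF_or_plug_lam {t : Tm} : NoCF t → NaCF t ∨ ∃ L s, t = plug L (lam s)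
  | .na h => .inl h
  | .nb h => h.neCF_or_plug_lam.imp_left .ne

theorem NoCF.neCF_or_plug_bang_or_plug_lam {t : Tm} :
    NoCF t → NeCF t ∨ (∃ L s, t = plug L (bang s)) ∨ ∃ L s, t = plug L (lam s)
  | .na h => h.neCF_or_plug_bang.imp_right .inl
  | .nb h => h.neCF_or_plug_lam.imp_right .inr

theorem NoCF.esub_neCF {t u : Tm} (ht : NoCF t) (hu : NeCF u) : NoCF (esub t u) := by
  cases ht with
  | na h => exact .na (.esub h hu)
  | nb h => exact .nb (.esub h hu)

def HasClash (t : Tm) : Prop := ∃ s, WSub t s ∧ Clash s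

def Progress (t : Tm) : Prop := (∃ t', StepW t t') ∨ HasClash t ∨ NoCF t

theorem progress_der {t : Tm} (ht : NoCF t) : Progress (der t) := by
  rcases ht.neCF_or_plug_bang_or_plug_lam with h | ⟨L, s, rfl⟩ | ⟨L, s, rfl⟩
  · exact .inr (.inr (.na (.ne (.der h))))
  · exact .inl ⟨_, .db, .root (.db L s)⟩
  · exact .inr (.inl ⟨_, .refl _, .derLam L s⟩)

theorem progress_app {t u : Tm} (ht : NoCF t) (hu : NoCF u) : Progress (app t u) := by
  rcases ht.neCF_or_plug_bang_or_plug_lam with ht | ⟨L, s, rfl⟩ | ⟨L, s, rfl⟩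
  · rcases hu.naCF_or_plug_lam with hu | ⟨L, s, rfl⟩
    · exact .inr (.inr (.na (.ne (.app ht hu))))
    · exact .inr (.inl ⟨_, .refl _, .appLam L t s⟩)
  · exact .inr (.inl ⟨_, .refl _, .appBang L s u⟩)
  · exact .inl ⟨_, .dB, .root (.dB L s u)⟩

theorem progress_esub {t u : Tm} (ht : NoCF t) (hu : NoCF u) : Progress (esub t u) := by
  rcases hu.neCF_or_plug_bang_or_plug_lam with hu | ⟨L, s, rfl⟩ | ⟨L, s, rfl⟩
  · exact .inr (.inr (ht.esub_neCF hu))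
  · exact .inl ⟨_, .sb, .root (.sb L t s)⟩
  · exact .inr (.inl ⟨_, .refl _, .esubLam L t s⟩)

theorem progress (t : Tm) : Progress t := by
  induction t with
  | var k => exact .inr (.inr (.na (.ne (.var k))))
  | bang t => exact .inr (.inr (.na (.bang t)))
  | lam t ih =>
      rcases ih with ⟨t', r, hs⟩ | ⟨s, hsub, hc⟩ | h
      · exact .inl ⟨_, r, .lam hs⟩
      · exact .inr (.inl ⟨s, .lam hsub, hc⟩)
      · exact .inr (.inr (.nb (.lam h)))
  | der t ih =>
      rcases ih with ⟨t', r, hs⟩ | ⟨s, hsub, hc⟩ | h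
      · exact .inl ⟨_, r, .der hs⟩
      · exact .inr (.inl ⟨s, .der hsub, hc⟩)
      · exact progress_der h
  | app t u iht ihu =>
      rcases iht with ⟨t', r, hs⟩ | ⟨s, hsub, hc⟩ | ht
      · exact .inl ⟨_, r, .appL u hs⟩
      · exact .inr (.inl ⟨s, .appL u hsub, hc⟩)
      rcases ihu with ⟨u', r, hs⟩ | ⟨s, hsub, hc⟩ | hu
      · exact .inl ⟨_, r, .appR t hs⟩
      · exact .inr (.inl ⟨s, .appR t hsub, hc⟩)
      · exact progress_app ht hu
  | esub t u iht ihu =>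
      rcases iht with ⟨t', r, hs⟩ | ⟨s, hsub, hc⟩ | ht
      · exact .inl ⟨_, r, .esubL u hs⟩
      · exact .inr (.inl ⟨s, .esubL u hsub, hc⟩)
      rcases ihu with ⟨u', r, hs⟩ | ⟨s, hsub, hc⟩ | hu
      · exact .inl ⟨_, r, .esubR t hs⟩
      · exact .inr (.inl ⟨s, .esubR t hsub, hc⟩)
      · exact progress_esub ht hu

theorem WSub.typable {t s : Tm} (hts : WSub t s) {Γ : Ctx} {σ : Ty} {n : ℕ}
    (h : DerU Γ t σ n) : ∃ Γ' σ' n', DerU Γ' s σ' n' := by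
  induction hts generalizing Γ σ n with
  | refl => exact ⟨_, _, _, h⟩
  | appL _ _ ih => cases h with | app h₁ _ => exact ih h₁
  | appR _ _ ih => cases h with | app _ h₂ => exact ih h₂
  | lam _ ih => cases h with | abs _ h₁ _ => exact ih h₁
  | der _ ih => cases h with | dr h₁ => exact ih h₁
  | esubL _ _ ih => cases h with | es h₁ _ _ => exact ih h₁
  | esubR _ _ ih => cases h with | es _ h₂ _ => exact ih h₂

theorem DerU.plug_bang_inv {L : List Tm} {s : Tm} {Γ : Ctx} {σ : Ty} {n : ℕ}
    (h : DerU Γ (plug L (bang s)) σ n) : ∃ l, σ = Ty.mult l := by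
  obtain ⟨_, _, _, _, hs, _⟩ := h.plug_inv
  obtain ⟨l, rfl, _⟩ := hs.bang_inv
  exact ⟨l, rfl⟩

theorem DerU.plug_lam_inv {L : List Tm} {s : Tm} {Γ : Ctx} {σ : Ty} {n : ℕ}
    (h : DerU Γ (plug L (lam s)) σ n) : ∃ M τ, σ = Ty.arr M τ := by
  obtain ⟨_, _, _, _, hs, _⟩ := h.plug_inv
  cases hs with
  | abs M _ _ => exact ⟨M, _, rfl⟩

theorem Clash.not_derU {s : Tm} (hc : Clash s) {Γ : Ctx} {σ : Ty} {n : ℕ} :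
    ¬ DerU Γ s σ n := by
  intro h
  cases hc with
  | appBang =>
      cases h with
      | app h₁ _ => obtain ⟨_, he⟩ := h₁.plug_bang_inv; cases he
  | esubLam =>
      cases h with
      | es _ h₂ _ => obtain ⟨_, _, he⟩ := h₂.plug_lam_inv; cases he
  | derLam =>
      cases h with
      | dr h₁ => obtain ⟨_, _, he⟩ := h₁.plug_lam_inv; cases he
  | appLam =>
      cases h with
      | app _ h₂ => obtain ⟨_, _, he⟩ := h₂.plug_lam_inv; cases he

theorem DerU.not_hasClash {Γ : Ctx} {t : Tm} {σ : Ty} {n : ℕ} (h : DerU Γ t σ n) :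
    ¬ HasClash t := fun ⟨_, hts, hc⟩ =>
  let ⟨_, _, _, hs⟩ := hts.typable h
  hc.not_derU hs

mutual

theorem NeCF.typable : ∀ {t : Tm}, NeCF t → ∀ σ, ∃ Γ n, DerU Γ t σ n
  | _, .var k, σ => ⟨_, _, .ax k σ⟩
  | _, .app h₁ h₂, σ =>
      let ⟨l, _, _, du⟩ := h₂.typable
      let ⟨_, _, dt⟩ := h₁.typable (Ty.arr l σ)
      ⟨_, _, .app dt du⟩
  | _, .der h, σ =>
      let ⟨_, _, d⟩ := h.typable (Ty.mult [σ])
      ⟨_, _, .dr d⟩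
  | _, .esub h₁ h₂, σ =>
      let ⟨Γ, _, dt⟩ := h₁.typable σ
      let ⟨_, _, du⟩ := h₂.typable (Ty.mult (Γ 0).toList)
      ⟨_, _, .es dt du (Multiset.coe_toList _)⟩

theorem NaCF.typable : ∀ {t : Tm}, NaCF t → ∃ l Γ n, DerU Γ t (Ty.mult l) n
  | _, .bang _ => ⟨[], 0, 0, derU_bang_iff.2 .nil⟩
  | _, .ne h =>
      let ⟨_, _, d⟩ := h.typable (Ty.mult [])
      ⟨[], _, _, d⟩
  | _, .esub h₁ h₂ =>
      let ⟨l, Γ, _, dt⟩ := h₁.typable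
      let ⟨_, _, du⟩ := h₂.typable (Ty.mult (Γ 0).toList)
      ⟨l, _, _, .es dt du (Multiset.coe_toList _)⟩

theorem NbCF.typable : ∀ {t : Tm}, NbCF t → ∃ Γ σ n, DerU Γ t σ n
  | _, .ne h =>
      let ⟨_, _, d⟩ := h.typable (Ty.mult [])
      ⟨_, _, _, d⟩
  | _, .lam h =>
      let ⟨Γ, _, _, d⟩ := h.typable
      ⟨_, _, _, .abs (Γ 0).toList d (Multiset.coe_toList _)⟩
  | _, .esub h₁ h₂ =>
      let ⟨Γ, _, _, dt⟩ := h₁.typable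
      let ⟨_, _, du⟩ := h₂.typable (Ty.mult (Γ 0).toList)
      ⟨_, _, _, .es dt du (Multiset.coe_toList _)⟩

theorem NoCF.typable : ∀ {t : Tm}, NoCF t → ∃ Γ σ n, DerU Γ t σ n
  | _, .na h =>
      let ⟨_, _, _, d⟩ := h.typable
      ⟨_, _, _, d⟩
  | _, .nb h => h.typable

end

theorem DerU.wsize_le {Γ : Ctx} {t : Tm} {σ : Ty} {n : ℕ} (h : DerU Γ t σ n) : wsize t ≤ n := by
  induction h with
  | ax => simp [wsize]
  | bg => simp [wsize]
  | app _ _ ih₁ ih₂ | es _ _ _ ih₁ ih₂ => simp only [wsize]; omega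
  | abs _ _ _ ih | dr _ ih => simp only [wsize]; omega

theorem DerU.normalizes {Γ : Ctx} {t : Tm} {σ : Ty} {n : ℕ} (h : DerU Γ t σ n) :
    ∃ p, NoCF p ∧ Relation.ReflTransGen StepW t p := by
  induction n using Nat.strong_induction_on generalizing Γ t σ with
  | _ n ih =>
      rcases progress t with ⟨t', r, hs⟩ | hc | hp
      · obtain ⟨n', d, hn'⟩ := hs.subject_reduction h
        obtain ⟨p, hp, hred⟩ := ih n' hn' d
        exact ⟨p, hp, .head ⟨r, hs⟩ hred⟩
      · exact absurd hc h.not_hasClash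
      · exact ⟨t, hp, .refl⟩

theorem typable_of_reflTransGen {t p : Tm} (hred : Relation.ReflTransGen StepW t p)
    (hp : ∃ Γ σ n, DerU Γ p σ n) : ∃ Γ σ n, DerU Γ t σ n := by
  induction hred using Relation.ReflTransGen.head_induction_on with
  | refl => exact hp
  | head hs _ ih =>
      obtain ⟨Γ, σ, n, d⟩ := ih
      obtain ⟨r, hs⟩ := hs
      obtain ⟨n', d'⟩ := hs.subject_expansion d
      exact ⟨Γ, σ, n', d'⟩

theorem RedCnt.add_wsize_le {t p : Tm} {be : ℕ × ℕ} (hred : RedCnt t be p) {Γ : Ctx} {τ : Ty}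
    {n : ℕ} (h : DerU Γ t τ n) : be.1 + be.2 + wsize p ≤ n := by
  induction hred generalizing Γ τ n with
  | refl => simpa using h.wsize_le
  | db hs _ ih =>
      obtain ⟨n', d, hn'⟩ := hs.subject_reduction h
      have := ih d
      simp only at this ⊢
      omega
  | ex hs _ ih =>
      obtain ⟨n', d, hn'⟩ := hs.elim (·.subject_reduction h) (·.subject_reduction h)
      have := ih d
      simp only at this ⊢
      omega

/-- **Soundness and completeness of system 𝒰** (Theorem 3): `t` is
𝒰-typable iff `t` `→w`-normalises to a weak clash free normal form `p`.
Moreover, if `Γ ⊢ t : τ` has a derivation of size `n` and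
`t →w* p` (with `p ∈ no_wcf`) using `b` dB-steps and `e` s!/d!-steps, then
`n ≥ b + e + |p|_w`. -/
theorem soundness_completeness (t : Tm) :
    ((∃ (Γ : Ctx) (σ : Ty) (n : ℕ), DerU Γ t σ n) ↔
      ∃ p : Tm, NoCF p ∧ Relation.ReflTransGen StepW t p) ∧
    (∀ (Γ : Ctx) (τ : Ty) (n : ℕ) (p : Tm) (b e : ℕ),
      DerU Γ t τ n → NoCF p → RedCnt t (b, e) p →
      n ≥ b + e + Tm.wsize p) := by
  refine ⟨⟨fun ⟨_, _, _, h⟩ => h.normalizes, fun ⟨_, hp, hred⟩ =>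
    typable_of_reflTransGen hred hp.typable⟩, ?_⟩
  intro Γ τ n p b e h _ hred
  exact hred.add_wsize_le h
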